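/- If Ω is injective (all priorities unique), the ordering ≺ on node valuations (u, M, e), comparing first the cycle node by reward, then the path component set by the priority-occurrence ordering, then the length (smaller is better when the cycle node has even priority, larger when odd), is a strict linear order: any two distinct node valuations are comparable. -/
import Mathlib


/-- The reward of a node. -/
def rew {V : Type*} (Ω : V → ℕ) (v : V) : ℤ :=
  if Even (Ω v) then (Ω v : ℤ) else -(Ω v : ℤ)

/-- Priority occurrence mapping. -/
def occ {V : Type*} (Ω : V → ℕ) (M : Finset V) (p : ℕ) : ℕ :=
  (M.filter fun v => Ω v = p).card

/-- `M ≺ N` on finite node sets via priority occurrences. -/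
def SetPrec {V : Type*} (Ω : V → ℕ) (M N : Finset V) : Prop :=
  ∃ p, occ Ω M p ≠ occ Ω N p ∧ (∀ q, p < q → occ Ω M q = occ Ω N q) ∧
    ((occ Ω N p < occ Ω M p ∧ ¬ Even p) ∨ (occ Ω M p < occ Ω N p ∧ Even p))

/-- The ordering on node valuations `(u, M, e)`: first the cycle node by reward, then
the path component, then the length (smaller better iff the cycle node is odd). -/
def ValPrec {V : Type*} (Ω : V → ℕ) (x y : V × Finset V × ℕ) : Prop :=
  rew Ω x.1 < rew Ω y.1 ∨
  (rew Ω x.1 = rew Ω y.1 ∧ SetPrec Ω x.2.1 y.2.1) ∨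
  (rew Ω x.1 = rew Ω y.1 ∧ (∀ p, occ Ω x.2.1 p = occ Ω y.2.1 p) ∧
    ((x.2.2 < y.2.2 ∧ ¬ Even (Ω x.1)) ∨ (y.2.2 < x.2.2 ∧ Even (Ω x.1))))

lemma rew_inj {V : Type*} (Ω : V → ℕ) (hΩ : Function.Injective Ω) :
    Function.Injective (rew Ω) := by
  intro u v h
  apply hΩ
  unfold rew at h
  by_cases hu : Even (Ω u) <;> by_cases hv : Even (Ω v) <;> simp [hu, hv] at h <;> omega

lemma occ_all_eq {V : Type*} {Ω : V → ℕ} (hΩ : Function.Injective Ω) {M N : Finset V}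
    (h : ∀ p, occ Ω M p = occ Ω N p) : M = N := by
  classical
  ext v
  have := h (Ω v)
  unfold occ at this
  have hM : M.filter (fun w => Ω w = Ω v) = M.filter (fun w => w = v) := by
    apply Finset.filter_congr; intro w _; simp [hΩ.eq_iff]
  have hN : N.filter (fun w => Ω w = Ω v) = N.filter (fun w => w = v) := by
    apply Finset.filter_congr; intro w _; simp [hΩ.eq_iff]
  have key : ∀ S : Finset V, S.filter (fun w => w = v) = if v ∈ S then {v} else ∅ := by
    intro S
    ext w
    split_ifs with h <;> simp only [Finset.mem_filter, Finset.mem_singleton,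
      Finset.notMem_empty, iff_false, not_and] <;> aesop
  rw [hM, hN, key M, key N] at this
  by_cases h1 : v ∈ M <;> by_cases h2 : v ∈ N <;> simp [h1, h2] at this ⊢

lemma setprec_asymm {V : Type*} {Ω : V → ℕ} {M N : Finset V}
    (h1 : SetPrec Ω M N) (h2 : SetPrec Ω N M) : False := by
  obtain ⟨p, hp, hpa, hpd⟩ := h1
  obtain ⟨q, hq, hqa, hqd⟩ := h2
  rcases lt_trichotomy p q with h | h | h
  · exact hq (hpa q h).symm
  · subst h
    rcases hpd with ⟨a1, b1⟩ | ⟨a1, b1⟩ <;> rcases hqd with ⟨a2, b2⟩ | ⟨a2, b2⟩ <;>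
      first | omega | exact b1 b2 | exact b2 b1
  · exact hp (hqa p h).symm

lemma setprec_total {V : Type*} {Ω : V → ℕ} (hΩ : Function.Injective Ω) {M N : Finset V}
    (h : M ≠ N) : SetPrec Ω M N ∨ SetPrec Ω N M := by
  classical
  set D := ((M ∪ N).image Ω).filter (fun p => occ Ω M p ≠ occ Ω N p) with hD
  have hmem : ∀ p, occ Ω M p ≠ occ Ω N p → p ∈ D := by
    intro p hp
    simp only [hD, Finset.mem_filter, Finset.mem_image]
    refine ⟨?_, hp⟩
    by_contra hc
    push_neg at hc
    apply hp
    unfold occ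
    have hM : M.filter (fun v => Ω v = p) = ∅ := by
      rw [Finset.filter_eq_empty_iff]; intro v hv he
      exact hc v (Finset.mem_union_left _ hv) he
    have hN : N.filter (fun v => Ω v = p) = ∅ := by
      rw [Finset.filter_eq_empty_iff]; intro v hv he
      exact hc v (Finset.mem_union_right _ hv) he
    rw [hM, hN]
  have hDne : D.Nonempty := by
    by_contra hc
    rw [Finset.not_nonempty_iff_eq_empty] at hc
    apply h
    apply occ_all_eq hΩ
    intro p
    by_contra hp
    have := hmem p hp
    simp [hc] at this
  set p := D.max' hDne with hpdef
  have hpD : p ∈ D := D.max'_mem hDne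
  have hpne : occ Ω M p ≠ occ Ω N p := by
    simp only [hD, Finset.mem_filter] at hpD; exact hpD.2
  have habove : ∀ q, p < q → occ Ω M q = occ Ω N q := by
    intro q hq
    by_contra hne
    exact absurd (D.le_max' q (hmem q hne)) (not_le.mpr hq)
  by_cases hev : Even p
  · rcases lt_or_gt_of_ne hpne with hlt | hgt
    · exact Or.inl ⟨p, hpne, habove, Or.inr ⟨hlt, hev⟩⟩
    · exact Or.inr ⟨p, hpne.symm, fun q hq => (habove q hq).symm, Or.inr ⟨hgt, hev⟩⟩
  · rcases lt_or_gt_of_ne hpne with hlt | hgt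
    · exact Or.inr ⟨p, hpne.symm, fun q hq => (habove q hq).symm, Or.inl ⟨hlt, hev⟩⟩
    · exact Or.inl ⟨p, hpne, habove, Or.inl ⟨hgt, hev⟩⟩

lemma setprec_irrefl {V : Type*} {Ω : V → ℕ} {M N : Finset V}
    (heq : ∀ p, occ Ω M p = occ Ω N p) (h : SetPrec Ω M N) : False := by
  obtain ⟨p, hp, _, _⟩ := h
  exact hp (heq p)

/-- If all priorities are unique, `≺` on node valuations is a strict linear order:
any two distinct node valuations are comparable, in exactly one direction. -/
theorem stmt_6 {V : Type*} (Ω : V → ℕ) (hΩ : Function.Injective Ω) :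
    ∀ x y : V × Finset V × ℕ, x ≠ y → Xor' (ValPrec Ω x y) (ValPrec Ω y x) := by
  intro x y hxy
  have hnot : ¬ (ValPrec Ω x y ∧ ValPrec Ω y x) := by
    rintro ⟨h1, h2⟩
    rcases h1 with h1 | ⟨he1, hs1⟩ | ⟨he1, ho1, hd1⟩ <;>
      rcases h2 with h2 | ⟨he2, hs2⟩ | ⟨he2, ho2, hd2⟩
    · omega
    · omega
    · omega
    · omega
    · exact setprec_asymm hs1 hs2
    · exact setprec_irrefl (fun p => (ho2 p).symm) hs1
    · omega
    · exact setprec_irrefl (fun p => (ho1 p).symm) hs2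
    · have huv : x.1 = y.1 := rew_inj Ω hΩ he1
      rw [huv] at hd1
      rcases hd1 with ⟨a1, b1⟩ | ⟨a1, b1⟩ <;> rcases hd2 with ⟨a2, b2⟩ | ⟨a2, b2⟩ <;>
        first | omega | exact b1 b2 | exact b2 b1
  have htot : ValPrec Ω x y ∨ ValPrec Ω y x := by
    by_cases hu : x.1 = y.1
    · by_cases hM : x.2.1 = y.2.1
      · have he : x.2.2 ≠ y.2.2 := by
          intro he
          exact hxy (Prod.ext hu (Prod.ext hM he))
        have ho : ∀ p, occ Ω x.2.1 p = occ Ω y.2.1 p := by rw [hM]; intro p; rfl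
        have hr : rew Ω x.1 = rew Ω y.1 := by rw [hu]
        by_cases hev : Even (Ω x.1)
        · rcases lt_or_gt_of_ne he with h | h
          · exact Or.inr (Or.inr (Or.inr ⟨hr.symm, fun p => (ho p).symm,
              Or.inr ⟨h, hu ▸ hev⟩⟩))
          · exact Or.inl (Or.inr (Or.inr ⟨hr, ho, Or.inr ⟨h, hev⟩⟩))
        · rcases lt_or_gt_of_ne he with h | h
          · exact Or.inl (Or.inr (Or.inr ⟨hr, ho, Or.inl ⟨h, hev⟩⟩))
          · exact Or.inr (Or.inr (Or.inr ⟨hr.symm, fun p => (ho p).symm,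
              Or.inl ⟨h, hu ▸ hev⟩⟩))
      · have hr : rew Ω x.1 = rew Ω y.1 := by rw [hu]
        rcases setprec_total hΩ hM with h | h
        · exact Or.inl (Or.inr (Or.inl ⟨hr, h⟩))
        · exact Or.inr (Or.inr (Or.inl ⟨hr.symm, h⟩))
    · have : rew Ω x.1 ≠ rew Ω y.1 := fun h => hu (rew_inj Ω hΩ h)
      rcases lt_or_gt_of_ne this with h | h
      · exact Or.inl (Or.inl h)
      · exact Or.inr (Or.inl h)
  rcases htot with h | h
  · exact Or.inl ⟨h, fun h2 => hnot ⟨h, h2⟩⟩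
  · exact Or.inr ⟨h, fun h2 => hnot ⟨h2, h⟩⟩
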